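/- arXiv:math/0402216 — 2 statements merged into one kernel-verified Lean document; each statement's English description precedes it below -/
import Mathlib

section
/- Two pairs (τ,τ′) and (κ,κ′) of involutions in Σ_N, each pair having the property that the two involutions have equal length on every block of their characteristic partition, are conjugate under the simultaneous conjugation action of Σ_N if and only if they have the same numerical characteristic partition (the partition of N given by the block sizes of the characteristic partition). -/
open Equiv Finset

def Ssign {N : ℕ} (σ τ : Equiv.Perm (Fin N)) : ℤ :=
  (-1) ^ (Finset.univ.filter (fun p : Fin N × Fin N =>
      p.1 < p.2 ∧ τ p.1 = p.2 ∧ σ p.2 < σ p.1)).card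


/-- H is invariant under a permutation π. -/
def InvSet {N : ℕ} (π : Equiv.Perm (Fin N)) (H : Finset (Fin N)) : Prop :=
  ∀ a ∈ H, π a ∈ H

/-- H is a block of the characteristic partition of (τ,κ): a minimal nonempty
subset of {1,…,N} invariant under both τ and κ. -/
def IsCharBlock {N : ℕ} (τ κ : Equiv.Perm (Fin N)) (H : Finset (Fin N)) : Prop :=
  H.Nonempty ∧ InvSet τ H ∧ InvSet κ H ∧
    ∀ K ⊆ H, K.Nonempty → InvSet τ K → InvSet κ K → K = H

/-- The number of 2-cycles of an involution inside a block H. -/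
def lenOn {N : ℕ} (π : Equiv.Perm (Fin N)) (H : Finset (Fin N)) : ℕ :=
  (H.filter fun a => π a ≠ a).card / 2

-- The numerical characteristic partition of (τ,κ): the multiset of block
-- sizes of the characteristic partition.
open Classical in
noncomputable def numChar {N : ℕ} (τ κ : Equiv.Perm (Fin N)) : Multiset ℕ :=
  ((Finset.univ.filter fun H : Finset (Fin N) => IsCharBlock τ κ H).val).map Finset.card

variable {N : ℕ}

lemma invol_apply {τ : Perm (Fin N)} (h : τ * τ = 1) (a : Fin N) : τ (τ a) = a := by
  have := congrArg (fun s : Perm (Fin N) => s a) h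
  simpa [Perm.mul_apply] using this

lemma invSet_mem_iff {τ : Perm (Fin N)} (h : τ * τ = 1) {H : Finset (Fin N)}
    (hH : InvSet τ H) (a : Fin N) : a ∈ H ↔ τ a ∈ H :=
  ⟨fun ha => hH a ha, fun ha => by have := hH _ ha; rwa [invol_apply h] at this⟩

lemma invSet_sdiff {τ : Perm (Fin N)} (h : τ * τ = 1) {H G : Finset (Fin N)}
    (hH : InvSet τ H) (hG : InvSet τ G) : InvSet τ (H \ G) := by
  intro a ha
  rw [Finset.mem_sdiff] at ha ⊢
  exact ⟨hH a ha.1, fun hc => ha.2 (by rw [← invol_apply h a]; exact hG _ hc)⟩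

open Classical in
noncomputable def blockOf (τ κ : Perm (Fin N)) (a : Fin N) : Finset (Fin N) :=
  univ.filter (fun x => ∀ G : Finset (Fin N), a ∈ G → InvSet τ G → InvSet κ G → x ∈ G)

lemma mem_blockOf_iff {τ κ : Perm (Fin N)} {a x : Fin N} :
    x ∈ blockOf τ κ a ↔ ∀ G : Finset (Fin N), a ∈ G → InvSet τ G → InvSet κ G → x ∈ G := by
  simp [blockOf]

lemma self_mem_blockOf {τ κ : Perm (Fin N)} (a : Fin N) : a ∈ blockOf τ κ a :=
  mem_blockOf_iff.2 fun _ hG _ _ => hG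

lemma blockOf_subset {τ κ : Perm (Fin N)} {a : Fin N} {G : Finset (Fin N)}
    (haG : a ∈ G) (h1 : InvSet τ G) (h2 : InvSet κ G) : blockOf τ κ a ⊆ G :=
  fun _ hx => mem_blockOf_iff.1 hx G haG h1 h2

lemma invSet_blockOf_left {τ κ : Perm (Fin N)} (a : Fin N) : InvSet τ (blockOf τ κ a) := by
  intro x hx
  rw [mem_blockOf_iff] at hx ⊢
  exact fun G hG h1 h2 => h1 _ (hx G hG h1 h2)

lemma invSet_blockOf_right {τ κ : Perm (Fin N)} (a : Fin N) : InvSet κ (blockOf τ κ a) := by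
  intro x hx
  rw [mem_blockOf_iff] at hx ⊢
  exact fun G hG h1 h2 => h2 _ (hx G hG h1 h2)

lemma isCharBlock_blockOf {τ κ : Perm (Fin N)} (hτ : τ * τ = 1) (hκ : κ * κ = 1) (a : Fin N) :
    IsCharBlock τ κ (blockOf τ κ a) := by
  refine ⟨⟨a, self_mem_blockOf a⟩, invSet_blockOf_left a, invSet_blockOf_right a, ?_⟩
  intro K hK hKne hK1 hK2
  by_cases haK : a ∈ K
  · exact le_antisymm hK (blockOf_subset haK hK1 hK2)
  · exfalso
    have hD1 : InvSet τ (blockOf τ κ a \ K) :=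
      invSet_sdiff hτ (invSet_blockOf_left a) hK1
    have hD2 : InvSet κ (blockOf τ κ a \ K) :=
      invSet_sdiff hκ (invSet_blockOf_right a) hK2
    have haD : a ∈ blockOf τ κ a \ K := Finset.mem_sdiff.2 ⟨self_mem_blockOf a, haK⟩
    have hsub : blockOf τ κ a ⊆ blockOf τ κ a \ K := blockOf_subset haD hD1 hD2
    obtain ⟨b, hb⟩ := hKne
    have : b ∈ blockOf τ κ a \ K := hsub (hK hb)
    exact (Finset.mem_sdiff.1 this).2 hb

lemma charBlock_eq_blockOf {τ κ : Perm (Fin N)} (hτ : τ * τ = 1) (hκ : κ * κ = 1)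
    {H : Finset (Fin N)} (hH : IsCharBlock τ κ H) {a : Fin N} (ha : a ∈ H) :
    H = blockOf τ κ a := by
  have hsub : blockOf τ κ a ⊆ H := blockOf_subset ha hH.2.1 hH.2.2.1
  exact (hH.2.2.2 _ hsub ⟨a, self_mem_blockOf a⟩ (invSet_blockOf_left a)
    (invSet_blockOf_right a)).symm

lemma charBlock_disjoint {τ κ : Perm (Fin N)} (hτ : τ * τ = 1) (hκ : κ * κ = 1)
    {H H' : Finset (Fin N)} (hH : IsCharBlock τ κ H) (hH' : IsCharBlock τ κ H')
    (hne : H ≠ H') : Disjoint H H' := by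
  rw [Finset.disjoint_left]
  intro x hx hx'
  exact hne ((charBlock_eq_blockOf hτ hκ hH hx).trans (charBlock_eq_blockOf hτ hκ hH' hx').symm)

/-- fixed-point free invariant sets of involutions have even cardinality -/
lemma even_card_of_invol (τ : Perm (Fin N)) (hτ : τ * τ = 1) :
    ∀ n (S : Finset (Fin N)), S.card = n → InvSet τ S → (∀ a ∈ S, τ a ≠ a) → Even S.card := by
  intro n
  induction n using Nat.strong_induction_on with
  | _ n ih =>
    intro S hcard hinv hfree
    rcases S.eq_empty_or_nonempty with rfl | ⟨a, ha⟩
    · simp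
    · set S' := S \ {a, τ a} with hS'
      have hτa : τ a ∈ S := hinv a ha
      have hane : a ≠ τ a := fun h => hfree a ha h.symm
      have hcard' : S'.card = S.card - 2 := by
        rw [hS', Finset.card_sdiff_of_subset (by
          intro x hx
          simp only [Finset.mem_insert, Finset.mem_singleton] at hx
          rcases hx with rfl | rfl
          · exact ha
          · exact hτa)]
        rw [Finset.card_pair hane]
      have hinv' : InvSet τ S' := by
        intro x hx
        rw [hS', Finset.mem_sdiff] at hx ⊢
        refine ⟨hinv x hx.1, fun hc => hx.2 ?_⟩
        simp only [Finset.mem_insert, Finset.mem_singleton] at hc ⊢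
        rcases hc with h | h
        · right; rw [← h]; exact (invol_apply hτ x).symm
        · left; exact τ.injective h
      have hfree' : ∀ b ∈ S', τ b ≠ b := fun b hb => hfree b (Finset.mem_sdiff.1 hb).1
      have h2 : 2 ≤ S.card := by
        have : ({a, τ a} : Finset (Fin N)) ⊆ S := by
          intro x hx
          simp only [Finset.mem_insert, Finset.mem_singleton] at hx
          rcases hx with rfl | rfl
          exacts [ha, hτa]
        calc 2 = ({a, τ a} : Finset (Fin N)).card := by simp [hane]
          _ ≤ S.card := Finset.card_le_card this
      have hev' : Even S'.card := by
        have hlt : S'.card < n := by rw [hcard']; omega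
        exact ih S'.card hlt S' rfl hinv' hfree'
      rw [hcard'] at hev'
      obtain ⟨k, hk⟩ := hev'
      exact ⟨k + 1, by omega⟩

lemma two_mul_lenOn {τ : Perm (Fin N)} (hτ : τ * τ = 1) {H : Finset (Fin N)}
    (hinv : InvSet τ H) : 2 * lenOn τ H = (H.filter fun a => τ a ≠ a).card := by
  have hinv' : InvSet τ (H.filter fun a => τ a ≠ a) := by
    intro a ha
    rw [Finset.mem_filter] at ha ⊢
    refine ⟨hinv a ha.1, fun hc => ha.2 ?_⟩
    rw [invol_apply hτ] at hc
    exact hc.symm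
  have hfree : ∀ a ∈ (H.filter fun a => τ a ≠ a), τ a ≠ a := fun a ha =>
    (Finset.mem_filter.1 ha).2
  obtain ⟨k, hk⟩ := even_card_of_invol τ hτ _ _ rfl hinv' hfree
  rw [lenOn, hk]
  omega

lemma tau_pow_conj {τ π : Perm (Fin N)} (hbase : τ * π * τ = π⁻¹) (hτ : τ * τ = 1) (k : ℕ) :
    τ * π ^ k = (π ^ k)⁻¹ * τ := by
  have h1 : τ * π = π⁻¹ * τ := by rw [← hbase, mul_assoc, mul_assoc, hτ, mul_one]
  induction k with
  | zero => simp
  | succ k ih =>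
      calc τ * π ^ (k + 1) = (τ * π ^ k) * π := by rw [pow_succ, ← mul_assoc]
        _ = (π ^ k)⁻¹ * (τ * π) := by rw [ih, mul_assoc]
        _ = (π ^ k)⁻¹ * (π⁻¹ * τ) := by rw [h1]
        _ = (π ^ (k + 1))⁻¹ * τ := by rw [pow_succ', mul_inv_rev, mul_assoc]

lemma canonExists {τ τ' : Perm (Fin N)} (hτ : τ * τ = 1) (hτ' : τ' * τ' = 1)
    {H : Finset (Fin N)} (hH : IsCharBlock τ τ' H) (hlen : lenOn τ H = lenOn τ' H) :
    ∃ x : ℕ → Fin N,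
      (∀ i, i + 1 < H.card → x (i + 1) = (if i % 2 = 0 then τ else τ') (x i)) ∧
      (∀ i i', i < H.card → i' < H.card → x i = x i' → i = i') ∧
      (Finset.range H.card).image x = H ∧
      (if H.card % 2 = 0 then τ' (x (H.card - 1)) = x 0
       else τ' (x 0) = x 0 ∧ τ (x (H.card - 1)) = x (H.card - 1)) := by
  classical
  obtain ⟨a, ha⟩ := hH.1
  set π : Perm (Fin N) := τ' * τ with hπ
  have hτi : τ⁻¹ = τ := inv_eq_of_mul_eq_one_right hτ
  have hτ'i : τ'⁻¹ = τ' := inv_eq_of_mul_eq_one_right hτ'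
  have hbase : τ * π * τ = π⁻¹ := by
    rw [hπ, mul_inv_rev, hτi, hτ'i]
    simp only [mul_assoc]
    rw [hτ, mul_one]
  have hπτ : ∀ b, π (τ b) = τ' b := by
    intro b
    show τ' (τ (τ b)) = τ' b
    rw [invol_apply hτ]
  have hmemπ : ∀ k : ℕ, (π ^ k) a ∈ H := by
    intro k
    induction k with
    | zero => simpa using ha
    | succ k ih =>
        rw [pow_succ', Perm.mul_apply]
        exact hH.2.2.1 _ (hH.2.1 _ ih)
  have hper : a ∈ Function.periodicPts ⇑π := by
    refine Function.mk_mem_periodicPts (orderOf_pos π) ?_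
    show (⇑π)^[orderOf π] a = a
    rw [← Equiv.Perm.coe_pow, pow_orderOf_eq_one]
    rfl
  obtain ⟨m, hm_def⟩ : ∃ m', m' = Function.minimalPeriod ⇑π a := ⟨_, rfl⟩
  have hm : 0 < m := by
    rw [hm_def]
    exact Function.minimalPeriod_pos_of_mem_periodicPts hper
  haveI : NeZero m := ⟨hm.ne'⟩
  set u : ZMod m → Fin N := fun z => (π ^ z.val) a with hu_def
  have hcast : ∀ k : ℕ, (π ^ k) a = u ((k : ZMod m)) := by
    intro k
    show _ = (π ^ ((k : ZMod m)).val) a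
    rw [ZMod.val_natCast]
    have h := Function.iterate_mod_minimalPeriod_eq (f := ⇑π) (x := a) (n := k)
    rw [← hm_def] at h
    calc (π ^ k) a = (⇑π)^[k] a := by rw [← Equiv.Perm.coe_pow]
      _ = (⇑π)^[k % m] a := h.symm
      _ = (π ^ (k % m)) a := by rw [← Equiv.Perm.coe_pow]
  have uinj : Function.Injective u := by
    intro z w h
    have h' : (⇑π)^[z.val] a = (⇑π)^[w.val] a := by
      simpa only [← Equiv.Perm.coe_pow] using h
    have hv : z.val = w.val := by
      have hinjIio := Function.iterate_injOn_Iio_minimalPeriod (f := ⇑π) (x := a)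
      rw [← hm_def] at hinjIio
      exact hinjIio (Set.mem_Iio.mpr (ZMod.val_lt z)) (Set.mem_Iio.mpr (ZMod.val_lt w)) h'
    exact ZMod.val_injective m hv
  have hvz : ∀ z : ZMod m, ((z.val : ℕ) : ZMod m) = z := by
    intro z
    rw [ZMod.natCast_val, ZMod.cast_id]
  have hstep : ∀ z, π (u z) = u (z + 1) := by
    intro z
    have h1 : π (u z) = (π ^ (z.val + 1)) a := by rw [pow_succ']; rfl
    rw [h1, hcast]
    congr 1
    push_cast [hvz]
    ring
  have hupow : ∀ (k : ℕ) (z), (π ^ k) (u z) = u (z + k) := by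
    intro k
    induction k with
    | zero => simp
    | succ k ih =>
        intro z
        rw [pow_succ, Perm.mul_apply, hstep, ih]
        congr 1
        push_cast
        ring
  have humem : ∀ z, u z ∈ H := fun z => hmemπ z.val
  have hτu : ∀ z, τ (u z) = (π ^ z.val)⁻¹ (τ a) := by
    intro z
    have := congrArg (fun s : Perm (Fin N) => s a) (tau_pow_conj hbase hτ z.val)
    simpa [Perm.mul_apply] using this
  have hu0 : u 0 = a := by
    show (π ^ (0 : ZMod m).val) a = a
    rw [ZMod.val_zero, pow_zero]
    rfl
  by_cases hA : ∀ z : ZMod m, τ a ≠ u z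
  · -- Case A : block of even size 2m
    have hAt : ∀ z w : ZMod m, τ (u z) ≠ u w := by
      intro z w h
      apply hA (w + z.val)
      have h2 : τ a = (π ^ z.val) (u w) := by
        rw [← h, hτu z, Perm.coe_inv, Equiv.apply_symm_apply]
      rw [h2, hupow]
    have hm1 : ((m - 1 : ℕ) : ZMod m) = -1 := by
      have h0 : ((m - 1 : ℕ) : ZMod m) + 1 = 0 := by
        calc ((m - 1 : ℕ) : ZMod m) + 1 = ((m - 1 + 1 : ℕ) : ZMod m) := by push_cast; ring
          _ = ((m : ℕ) : ZMod m) := by congr 1; omega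
          _ = 0 := ZMod.natCast_self m
      exact eq_neg_of_add_eq_zero_left h0
    have hτ'u : ∀ z, τ' (u z) = τ (u (z - 1)) := by
      intro z
      have h0 : τ' (τ (u (z - 1))) = u z := by
        have : τ' (τ (u (z - 1))) = π (u (z - 1)) := rfl
        rw [this, hstep]
        congr 1
        ring
      rw [← h0, invol_apply hτ']
    set x : ℕ → Fin N := fun i =>
      if i % 2 = 0 then u ((i / 2 : ℕ) : ZMod m) else τ (u ((i / 2 : ℕ) : ZMod m)) with hx
    have hxe : ∀ i, i % 2 = 0 → x i = u ((i / 2 : ℕ) : ZMod m) := by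
      intro i h; simp only [hx, if_pos h]
    have hxo : ∀ i, i % 2 = 1 → x i = τ (u ((i / 2 : ℕ) : ZMod m)) := by
      intro i h
      simp only [hx]
      rw [if_neg (by omega)]
    have hrec : ∀ i, x (i + 1) = (if i % 2 = 0 then τ else τ') (x i) := by
      intro i
      rcases Nat.even_or_odd i with he | ho
      · have h0 : i % 2 = 0 := Nat.even_iff.1 he
        have h1 : (i + 1) % 2 = 1 := by omega
        have h2 : (i + 1) / 2 = i / 2 := by omega
        rw [hxo _ h1, hxe _ h0, if_pos h0, h2]
      · have h0 : i % 2 = 1 := Nat.odd_iff.1 ho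
        have h1 : (i + 1) % 2 = 0 := by omega
        have h2 : (i + 1) / 2 = i / 2 + 1 := by omega
        rw [hxe _ h1, hxo _ h0, if_neg (by omega : ¬ i % 2 = 0), h2]
        calc u (((i / 2 + 1 : ℕ)) : ZMod m)
            = u (((i / 2 : ℕ) : ZMod m) + 1) := by congr 1; push_cast; ring
          _ = π (u ((i / 2 : ℕ) : ZMod m)) := (hstep _).symm
          _ = τ' (τ (u ((i / 2 : ℕ) : ZMod m))) := rfl
    have hinj : ∀ i i', i < 2 * m → i' < 2 * m → x i = x i' → i = i' := by
      intro i i' hi hi' hxx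
      have hdm : i / 2 < m := by omega
      have hdm' : i' / 2 < m := by omega
      have key : ∀ s s', s < m → s' < m → u ((s : ℕ) : ZMod m) = u ((s' : ℕ) : ZMod m) → s = s' := by
        intro s s' hs hs' hss
        have := congrArg ZMod.val (uinj hss)
        rwa [ZMod.val_natCast, ZMod.val_natCast, Nat.mod_eq_of_lt hs, Nat.mod_eq_of_lt hs'] at this
      rcases Nat.even_or_odd i with he | ho <;> rcases Nat.even_or_odd i' with he' | ho'
      · have h0 : i % 2 = 0 := Nat.even_iff.1 he
        have h0' : i' % 2 = 0 := Nat.even_iff.1 he'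
        rw [hxe _ h0, hxe _ h0'] at hxx
        have := key _ _ hdm hdm' hxx
        omega
      · have h0 : i % 2 = 0 := Nat.even_iff.1 he
        have h0' : i' % 2 = 1 := Nat.odd_iff.1 ho'
        rw [hxe _ h0, hxo _ h0'] at hxx
        exact absurd hxx.symm (hAt _ _)
      · have h0 : i % 2 = 1 := Nat.odd_iff.1 ho
        have h0' : i' % 2 = 0 := Nat.even_iff.1 he'
        rw [hxo _ h0, hxe _ h0'] at hxx
        exact absurd hxx (hAt _ _)
      · have h0 : i % 2 = 1 := Nat.odd_iff.1 ho
        have h0' : i' % 2 = 1 := Nat.odd_iff.1 ho'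
        rw [hxo _ h0, hxo _ h0'] at hxx
        have := key _ _ hdm hdm' (τ.injective hxx)
        omega
    have hxmem : ∀ i, x i ∈ H := by
      intro i
      rcases Nat.even_or_odd i with he | ho
      · rw [hxe _ (Nat.even_iff.1 he)]; exact humem _
      · rw [hxo _ (Nat.odd_iff.1 ho)]; exact hH.2.1 _ (humem _)
    set X := (Finset.range (2 * m)).image x with hX
    have hXsub : X ⊆ H := by
      intro b hb
      obtain ⟨i, _, rfl⟩ := Finset.mem_image.1 hb
      exact hxmem i
    have hx0 : x 0 = a := by
      rw [hxe 0 rfl]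
      simpa using hu0
    have haX : a ∈ X := by
      rw [← hx0]
      exact Finset.mem_image.2 ⟨0, Finset.mem_range.2 (by omega), rfl⟩
    have hXτ : InvSet τ X := by
      intro b hb
      obtain ⟨i, hi, rfl⟩ := Finset.mem_image.1 hb
      rw [Finset.mem_range] at hi
      rcases Nat.even_or_odd i with he | ho
      · have h0 : i % 2 = 0 := Nat.even_iff.1 he
        have h1 : i + 1 < 2 * m := by omega
        have : τ (x i) = x (i + 1) := by rw [hrec i, if_pos h0]
        rw [this]
        exact Finset.mem_image.2 ⟨i + 1, Finset.mem_range.2 h1, rfl⟩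
      · have h0 : i % 2 = 1 := Nat.odd_iff.1 ho
        have h2 : (i - 1) % 2 = 0 := by omega
        have h3 : (i - 1) / 2 = i / 2 := by omega
        have : τ (x i) = x (i - 1) := by
          rw [hxo _ h0, invol_apply hτ, hxe _ h2, h3]
        rw [this]
        exact Finset.mem_image.2 ⟨i - 1, Finset.mem_range.2 (by omega), rfl⟩
    have hXτ' : InvSet τ' X := by
      intro b hb
      obtain ⟨i, hi, rfl⟩ := Finset.mem_image.1 hb
      rw [Finset.mem_range] at hi
      rcases Nat.even_or_odd i with he | ho
      · have h0 : i % 2 = 0 := Nat.even_iff.1 he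
        set t := 2 * ((i / 2 + (m - 1)) % m) + 1 with ht
        have htlt : t < 2 * m := by
          have := Nat.mod_lt (i / 2 + (m - 1)) hm
          omega
        have : τ' (x i) = x t := by
          rw [hxe _ h0, hτ'u, hxo t (by omega), show t / 2 = (i / 2 + (m - 1)) % m by omega]
          congr 1
          rw [ZMod.natCast_mod]
          push_cast [hm1]
          ring
        rw [this]
        exact Finset.mem_image.2 ⟨t, Finset.mem_range.2 htlt, rfl⟩
      · have h0 : i % 2 = 1 := Nat.odd_iff.1 ho
        set t := 2 * ((i / 2 + 1) % m) with ht
        have htlt : t < 2 * m := by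
          have := Nat.mod_lt (i / 2 + 1) hm
          omega
        have : τ' (x i) = x t := by
          rw [hxo _ h0]
          calc τ' (τ (u ((i / 2 : ℕ) : ZMod m))) = π (u ((i / 2 : ℕ) : ZMod m)) := rfl
            _ = u (((i / 2 : ℕ) : ZMod m) + 1) := hstep _
            _ = u (((i / 2 + 1) % m : ℕ) : ZMod m) := by rw [ZMod.natCast_mod]; congr 1; push_cast; ring
            _ = x t := by rw [hxe t (by omega), show t / 2 = (i / 2 + 1) % m by omega]
        rw [this]
        exact Finset.mem_image.2 ⟨t, Finset.mem_range.2 htlt, rfl⟩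
    have hXH : X = H := hH.2.2.2 X hXsub ⟨a, haX⟩ hXτ hXτ'
    have hcard : H.card = 2 * m := by
      rw [← hXH, hX, Finset.card_image_of_injOn, Finset.card_range]
      intro i hi i' hi' h
      exact hinj i i' (Finset.mem_range.1 hi) (Finset.mem_range.1 hi') h
    refine ⟨x, ?_, ?_, ?_, ?_⟩
    · intro i _
      exact hrec i
    · rw [hcard]; exact hinj
    · rw [hcard, ← hX]; exact hXH
    · rw [hcard, if_pos (by omega : 2 * m % 2 = 0)]
      have h0 : (2 * m - 1) % 2 = 1 := by omega
      have h1 : (2 * m - 1) / 2 = m - 1 := by omega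
      calc τ' (x (2 * m - 1)) = τ' (τ (u ((m - 1 : ℕ) : ZMod m))) := by rw [hxo _ h0, h1]
        _ = π (u ((m - 1 : ℕ) : ZMod m)) := rfl
        _ = u (((m - 1 : ℕ) : ZMod m) + 1) := hstep _
        _ = u 0 := by rw [hm1]; ring_nf
        _ = x 0 := by rw [hx0, hu0]

  · -- Case B
    push_neg at hA
    obtain ⟨j, hj⟩ := hA
    have hτuB : ∀ z, τ (u z) = u (j - z) := by
      intro z
      apply (π ^ z.val).injective
      rw [hτu, Perm.coe_inv, Equiv.apply_symm_apply, hupow, hj]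
      congr 1
      rw [hvz]
      ring
    have hτ'uB : ∀ z, τ' (u z) = u (j + 1 - z) := by
      intro z
      calc τ' (u z) = π (τ (u z)) := (hπτ _).symm
        _ = π (u (j - z)) := by rw [hτuB]
        _ = u (j - z + 1) := hstep _
        _ = u (j + 1 - z) := by congr 1; ring
    set U := (Finset.univ : Finset (ZMod m)).image u with hU
    have hUsub : U ⊆ H := by
      intro b hb
      obtain ⟨z, _, rfl⟩ := Finset.mem_image.1 hb
      exact humem z
    have haU : a ∈ U := by
      rw [← hu0]
      exact Finset.mem_image.2 ⟨0, Finset.mem_univ _, rfl⟩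
    have hUτ : InvSet τ U := by
      intro b hb
      obtain ⟨z, _, rfl⟩ := Finset.mem_image.1 hb
      rw [hτuB]
      exact Finset.mem_image.2 ⟨j - z, Finset.mem_univ _, rfl⟩
    have hUτ' : InvSet τ' U := by
      intro b hb
      obtain ⟨z, _, rfl⟩ := Finset.mem_image.1 hb
      rw [hτ'uB]
      exact Finset.mem_image.2 ⟨j + 1 - z, Finset.mem_univ _, rfl⟩
    have hUH : U = H := hH.2.2.2 U hUsub ⟨a, haU⟩ hUτ hUτ'
    have hcardB : H.card = m := by
      rw [← hUH, hU, Finset.card_image_of_injOn uinj.injOn, Finset.card_univ, ZMod.card]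
    have hfixτ : (H.filter fun b => τ b = b).Nonempty ↔ ∃ z : ZMod m, 2 * z = j := by
      constructor
      · rintro ⟨b, hb⟩
        rw [Finset.mem_filter, ← hUH] at hb
        obtain ⟨hb1, hb2⟩ := hb
        obtain ⟨z, _, rfl⟩ := Finset.mem_image.1 hb1
        rw [hτuB] at hb2
        have h := uinj hb2
        exact ⟨z, by linear_combination -h⟩
      · rintro ⟨z, hz⟩
        refine ⟨u z, Finset.mem_filter.2 ⟨humem z, ?_⟩⟩
        rw [hτuB]
        congr 1
        linear_combination -hz
    have hfixτ' : (H.filter fun b => τ' b = b).Nonempty ↔ ∃ z : ZMod m, 2 * z = j + 1 := by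
      constructor
      · rintro ⟨b, hb⟩
        rw [Finset.mem_filter, ← hUH] at hb
        obtain ⟨hb1, hb2⟩ := hb
        obtain ⟨z, _, rfl⟩ := Finset.mem_image.1 hb1
        rw [hτ'uB] at hb2
        have h := uinj hb2
        exact ⟨z, by linear_combination -h⟩
      · rintro ⟨z, hz⟩
        refine ⟨u z, Finset.mem_filter.2 ⟨humem z, ?_⟩⟩
        rw [hτ'uB]
        congr 1
        linear_combination -hz
    have e1 := Finset.card_filter_add_card_filter_not (s := H) (p := fun b => τ b = b)
    have e2 := Finset.card_filter_add_card_filter_not (s := H) (p := fun b => τ' b = b)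
    have n1 : 2 * lenOn τ H = (H.filter fun b => ¬ τ b = b).card := two_mul_lenOn hτ hH.2.1
    have n2 : 2 * lenOn τ' H = (H.filter fun b => ¬ τ' b = b).card := two_mul_lenOn hτ' hH.2.2.1
    have hFcnt : (H.filter fun b => τ b = b).card = (H.filter fun b => τ' b = b).card := by
      omega
    rcases Nat.even_or_odd m with hme | hmo
    · exfalso
      obtain ⟨t, ht⟩ := hme
      have h2m : 2 ∣ m := ⟨t, by omega⟩
      haveI : Fact (1 < m) := ⟨by omega⟩
      have hsolv : ∀ c : ZMod m, (∃ z : ZMod m, 2 * z = c) ↔ c.val % 2 = 0 := by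
        intro c
        constructor
        · rintro ⟨z, rfl⟩
          rw [two_mul, ZMod.val_add, Nat.mod_mod_of_dvd _ h2m]
          omega
        · intro hc
          refine ⟨((c.val / 2 : ℕ) : ZMod m), ?_⟩
          have h2 : (2 * (c.val / 2) : ℕ) = c.val := by omega
          calc (2 : ZMod m) * ((c.val / 2 : ℕ) : ZMod m)
              = ((2 * (c.val / 2) : ℕ) : ZMod m) := by push_cast; ring
            _ = ((c.val : ℕ) : ZMod m) := by rw [h2]
            _ = c := hvz c
      have hjval : (j + 1).val = (j.val + 1) % m := by
        rw [ZMod.val_add, ZMod.val_one]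
      have hjl : j.val < m := ZMod.val_lt j
      by_cases hp : j.val % 2 = 0
      · have hpos : 0 < (H.filter fun b => τ b = b).card :=
          Finset.card_pos.2 (hfixτ.2 ((hsolv j).2 hp))
        have hzero : ¬ (H.filter fun b => τ' b = b).Nonempty := by
          intro hne
          have h := (hsolv (j + 1)).1 (hfixτ'.1 hne)
          rw [hjval] at h
          have hlt : j.val + 1 < m := by omega
          rw [Nat.mod_eq_of_lt hlt] at h
          omega
        rw [Finset.not_nonempty_iff_eq_empty] at hzero
        rw [hzero, Finset.card_empty] at hFcnt
        omega
      · have hpos : 0 < (H.filter fun b => τ' b = b).card := by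
          refine Finset.card_pos.2 (hfixτ'.2 ((hsolv (j + 1)).2 ?_))
          rw [hjval]
          by_cases hjm : j.val + 1 = m
          · rw [hjm, Nat.mod_self]
          · rw [Nat.mod_eq_of_lt (show j.val + 1 < m by omega)]
            omega
        have hzero : ¬ (H.filter fun b => τ b = b).Nonempty := by
          intro hne
          have h := (hsolv j).1 (hfixτ.1 hne)
          omega
        rw [Finset.not_nonempty_iff_eq_empty] at hzero
        rw [hzero, Finset.card_empty] at hFcnt
        omega
    · -- m odd
      obtain ⟨t, ht⟩ := hmo
      obtain ⟨z₀, hz₀⟩ : ∃ w : ZMod m, w = (((m + 1) / 2 : ℕ) : ZMod m) * (j + 1) := ⟨_, rfl⟩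
      have h2z : 2 * z₀ = j + 1 := by
        have hnat : (2 * ((m + 1) / 2) : ℕ) = m + 1 := by omega
        calc 2 * z₀ = ((2 * ((m + 1) / 2) : ℕ) : ZMod m) * (j + 1) := by
              rw [hz₀]; push_cast; ring
          _ = ((m + 1 : ℕ) : ZMod m) * (j + 1) := by rw [hnat]
          _ = (((m : ℕ) : ZMod m) + 1) * (j + 1) := by push_cast; ring
          _ = j + 1 := by rw [ZMod.natCast_self]; ring
      have hjz : j = 2 * z₀ - 1 := by linear_combination -h2z
      set x : ℕ → Fin N := fun i =>
        if i % 2 = 0 then u (z₀ + ((i / 2 : ℕ) : ZMod m))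
        else u (z₀ - 1 - ((i / 2 : ℕ) : ZMod m)) with hx
      have hxe : ∀ i, i % 2 = 0 → x i = u (z₀ + ((i / 2 : ℕ) : ZMod m)) := by
        intro i h; simp only [hx, if_pos h]
      have hxo : ∀ i, i % 2 = 1 → x i = u (z₀ - 1 - ((i / 2 : ℕ) : ZMod m)) := by
        intro i h; simp only [hx]; rw [if_neg (by omega)]
      have hrec : ∀ i, x (i + 1) = (if i % 2 = 0 then τ else τ') (x i) := by
        intro i
        rcases Nat.even_or_odd i with he | ho
        · have h0 : i % 2 = 0 := Nat.even_iff.1 he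
          rw [hxo _ (by omega), hxe _ h0, if_pos h0, hτuB,
            show (i + 1) / 2 = i / 2 by omega]
          congr 1
          rw [hjz]
          ring
        · have h0 : i % 2 = 1 := Nat.odd_iff.1 ho
          rw [hxe _ (by omega), hxo _ h0, if_neg (by omega : ¬ i % 2 = 0), hτ'uB,
            show (i + 1) / 2 = i / 2 + 1 by omega]
          congr 1
          push_cast
          linear_combination h2z
      have key : ∀ s s' : ℕ, s < m → s' < m →
          ((s : ℕ) : ZMod m) = ((s' : ℕ) : ZMod m) → s = s' := by
        intro s s' hs hs' hss
        have := congrArg ZMod.val hss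
        rwa [ZMod.val_natCast, ZMod.val_natCast, Nat.mod_eq_of_lt hs, Nat.mod_eq_of_lt hs'] at this
      have hinj : ∀ i i', i < m → i' < m → x i = x i' → i = i' := by
        intro i i' hi hi' hxx
        rcases Nat.even_or_odd i with he | ho <;> rcases Nat.even_or_odd i' with he' | ho'
        · have h0 : i % 2 = 0 := Nat.even_iff.1 he
          have h0' : i' % 2 = 0 := Nat.even_iff.1 he'
          rw [hxe _ h0, hxe _ h0'] at hxx
          have h := add_left_cancel (uinj hxx)
          have := key _ _ (by omega) (by omega) h
          omega
        · have h0 : i % 2 = 0 := Nat.even_iff.1 he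
          have h0' : i' % 2 = 1 := Nat.odd_iff.1 ho'
          rw [hxe _ h0, hxo _ h0'] at hxx
          have h := uinj hxx
          have h0'' : ((i / 2 + i' / 2 + 1 : ℕ) : ZMod m) = 0 := by
            push_cast
            linear_combination h
          rw [ZMod.natCast_eq_zero_iff] at h0''
          have hle := Nat.le_of_dvd (by omega) h0''
          omega
        · have h0 : i % 2 = 1 := Nat.odd_iff.1 ho
          have h0' : i' % 2 = 0 := Nat.even_iff.1 he'
          rw [hxo _ h0, hxe _ h0'] at hxx
          have h := uinj hxx
          have h0'' : ((i / 2 + i' / 2 + 1 : ℕ) : ZMod m) = 0 := by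
            push_cast
            linear_combination -h
          rw [ZMod.natCast_eq_zero_iff] at h0''
          have hle := Nat.le_of_dvd (by omega) h0''
          omega
        · have h0 : i % 2 = 1 := Nat.odd_iff.1 ho
          have h0' : i' % 2 = 1 := Nat.odd_iff.1 ho'
          rw [hxo _ h0, hxo _ h0'] at hxx
          have h := uinj hxx
          have h' : ((i / 2 : ℕ) : ZMod m) = ((i' / 2 : ℕ) : ZMod m) := by
            linear_combination -h
          have := key _ _ (by omega) (by omega) h'
          omega
      have hxmem : ∀ i, x i ∈ H := by
        intro i
        rcases Nat.even_or_odd i with he | ho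
        · rw [hxe _ (Nat.even_iff.1 he)]; exact humem _
        · rw [hxo _ (Nat.odd_iff.1 ho)]; exact humem _
      set X := (Finset.range m).image x with hX
      have hXsub : X ⊆ H := by
        intro b hb
        obtain ⟨i, _, rfl⟩ := Finset.mem_image.1 hb
        exact hxmem i
      have hXcard : X.card = m := by
        rw [hX, Finset.card_image_of_injOn, Finset.card_range]
        intro i hi i' hi' h
        exact hinj i i' (Finset.mem_range.1 hi) (Finset.mem_range.1 hi') h
      have hXH : X = H := Finset.eq_of_subset_of_card_le hXsub (by rw [hXcard, hcardB])
      refine ⟨x, fun i _ => hrec i, ?_, ?_, ?_⟩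
      · rw [hcardB]; exact hinj
      · rw [hcardB, ← hX]; exact hXH
      · rw [hcardB, if_neg (by omega : ¬ m % 2 = 0)]
        constructor
        · rw [hxe 0 rfl]
          norm_num
          rw [hτ'uB]
          congr 1
          linear_combination -h2z
        · have h0 : (m - 1) % 2 = 0 := by omega
          rw [hxe _ h0, hτuB, show (m - 1) / 2 = t by omega]
          congr 1
          have ht' : ((t : ℕ) : ZMod m) * 2 + 1 = 0 := by
            have hmz : ((2 * t + 1 : ℕ) : ZMod m) = 0 := by
              rw [show 2 * t + 1 = m by omega]; exact ZMod.natCast_self m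
            push_cast at hmz
            linear_combination hmz
          rw [hjz]
          linear_combination -ht'


def Ti (n i : ℕ) : ℕ := if i % 2 = 0 then (if i + 1 = n then i else i + 1) else i - 1

def T'i (n i : ℕ) : ℕ :=
  if i % 2 = 0 then (if i = 0 then (if n % 2 = 0 then n - 1 else 0) else i - 1)
  else (if i + 1 = n then 0 else i + 1)

lemma Ti_lt {n i : ℕ} (h : i < n) : Ti n i < n := by
  unfold Ti; split <;> [skip; omega]; split <;> omega

lemma T'i_lt {n i : ℕ} (h : i < n) : T'i n i < n := by
  unfold T'i
  split
  · split
    · split <;> omega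
    · omega
  · split <;> omega

lemma canonAction {τ τ' : Perm (Fin N)} (hτ : τ * τ = 1) (hτ' : τ' * τ' = 1)
    (x : ℕ → Fin N) (n : ℕ)
    (hrec : ∀ i, i + 1 < n → x (i + 1) = (if i % 2 = 0 then τ else τ') (x i))
    (hbd : if n % 2 = 0 then τ' (x (n - 1)) = x 0
      else τ' (x 0) = x 0 ∧ τ (x (n - 1)) = x (n - 1)) :
    ∀ i, i < n → τ (x i) = x (Ti n i) ∧ τ' (x i) = x (T'i n i) := by
  intro i hi
  constructor
  · by_cases h0 : i % 2 = 0
    · rw [Ti, if_pos h0]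
      by_cases h1 : i + 1 = n
      · rw [if_pos h1]
        have hodd : ¬ n % 2 = 0 := by omega
        rw [if_neg hodd] at hbd
        have h2 := hbd.2
        rwa [show n - 1 = i by omega] at h2
      · rw [if_neg h1, hrec i (by omega), if_pos h0]
    · rw [Ti, if_neg h0]
      have h2 : (i - 1) % 2 = 0 := by omega
      have h3 : i - 1 + 1 = i := by omega
      have h4 := hrec (i - 1) (by omega)
      rw [if_pos h2, h3] at h4
      rw [h4, invol_apply hτ]
  · by_cases h0 : i % 2 = 0
    · rw [T'i, if_pos h0]
      by_cases hz : i = 0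
      · rw [if_pos hz]
        by_cases hn : n % 2 = 0
        · rw [if_pos hn]
          rw [if_pos hn] at hbd
          rw [hz, ← hbd, invol_apply hτ']
        · rw [if_neg hn]
          rw [if_neg hn] at hbd
          rw [hz]; exact hbd.1
      · rw [if_neg hz]
        have h2 : ¬ (i - 1) % 2 = 0 := by omega
        have h3 : i - 1 + 1 = i := by omega
        have h4 := hrec (i - 1) (by omega)
        rw [if_neg h2, h3] at h4
        rw [h4, invol_apply hτ']
    · rw [T'i, if_neg h0]
      by_cases h1 : i + 1 = n
      · rw [if_pos h1]
        have hev : n % 2 = 0 := by omega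
        rw [if_pos hev] at hbd
        rwa [show n - 1 = i by omega] at hbd
      · rw [if_neg h1, hrec i (by omega), if_neg h0]

lemma coreMap {τ₁ τ₂ κ₁ κ₂ : Perm (Fin N)}
    (hτ₁ : τ₁ * τ₁ = 1) (hτ₂ : τ₂ * τ₂ = 1) (hκ₁ : κ₁ * κ₁ = 1) (hκ₂ : κ₂ * κ₂ = 1)
    {H K : Finset (Fin N)} (hH : IsCharBlock τ₁ τ₂ H) (hK : IsCharBlock κ₁ κ₂ K)
    (hlenH : lenOn τ₁ H = lenOn τ₂ H) (hlenK : lenOn κ₁ K = lenOn κ₂ K)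
    (hcard : H.card = K.card) :
    ∃ f : Fin N → Fin N, Set.InjOn f ↑H ∧ H.image f = K ∧
      ∀ a ∈ H, f a ∈ K ∧ f (τ₁ a) = κ₁ (f a) ∧ f (τ₂ a) = κ₂ (f a) := by
  classical
  obtain ⟨x, hxrec, hxinj, hximg, hxbd⟩ := canonExists hτ₁ hτ₂ hH hlenH
  obtain ⟨y, hyrec, hyinj, hyimg, hybd⟩ := canonExists hκ₁ hκ₂ hK hlenK
  rw [← hcard] at hyrec hyinj hyimg hybd
  set n := H.card with hn
  have hxact := canonAction hτ₁ hτ₂ x n hxrec hxbd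
  have hyact := canonAction hκ₁ hκ₂ y n hyrec hybd
  have hex : ∀ b ∈ H, ∃ i, i < n ∧ x i = b := by
    intro b hb
    rw [← hximg] at hb
    obtain ⟨i, hi, rfl⟩ := Finset.mem_image.1 hb
    exact ⟨i, Finset.mem_range.1 hi, rfl⟩
  set f : Fin N → Fin N := fun b => if hb : b ∈ H then y (Nat.find (hex b hb)) else b with hf
  have hfx : ∀ i, i < n → f (x i) = y i := by
    intro i hi
    have hmem : x i ∈ H := by
      rw [← hximg]
      exact Finset.mem_image.2 ⟨i, Finset.mem_range.2 hi, rfl⟩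
    rw [hf]
    simp only
    rw [dif_pos hmem]
    have hspec := Nat.find_spec (hex _ hmem)
    congr 1
    exact hxinj _ _ hspec.1 hi hspec.2
  have hyK : ∀ i, i < n → y i ∈ K := by
    intro i hi
    rw [← hyimg]
    exact Finset.mem_image.2 ⟨i, Finset.mem_range.2 hi, rfl⟩
  refine ⟨f, ?_, ?_, ?_⟩
  · intro a ha b hb hab
    obtain ⟨i, hi, rfl⟩ := hex a ha
    obtain ⟨i', hi', rfl⟩ := hex b hb
    rw [hfx i hi, hfx i' hi'] at hab
    rw [hyinj i i' hi hi' hab]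
  · rw [← hximg, Finset.image_image, ← hyimg]
    apply Finset.image_congr
    intro i hi
    exact hfx i (Finset.mem_range.1 hi)
  · intro a ha
    obtain ⟨i, hi, rfl⟩ := hex a ha
    refine ⟨by rw [hfx i hi]; exact hyK i hi, ?_, ?_⟩
    · rw [(hxact i hi).1, hfx _ (Ti_lt hi), hfx i hi, (hyact i hi).1]
    · rw [(hxact i hi).2, hfx _ (T'i_lt hi), hfx i hi, (hyact i hi).2]

lemma mem_msup {M : Multiset (Finset (Fin N))} {a : Fin N} :
    a ∈ M.sup ↔ ∃ H ∈ M, a ∈ H := by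
  induction M using Multiset.induction_on with
  | empty => simp [Multiset.sup_zero]
  | cons H M ih => simp [Multiset.sup_cons, Finset.sup_eq_union, Finset.mem_union, ih]

lemma glue {τ₁ τ₂ κ₁ κ₂ : Perm (Fin N)}
    (hτ₁ : τ₁ * τ₁ = 1) (hτ₂ : τ₂ * τ₂ = 1) (hκ₁ : κ₁ * κ₁ = 1) (hκ₂ : κ₂ * κ₂ = 1)
    (hlen₁ : ∀ H : Finset (Fin N), IsCharBlock τ₁ τ₂ H → lenOn τ₁ H = lenOn τ₂ H)
    (hlen₂ : ∀ H : Finset (Fin N), IsCharBlock κ₁ κ₂ H → lenOn κ₁ H = lenOn κ₂ H)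
    (M₁ M₂ : Multiset (Finset (Fin N)))
    (hrel : Multiset.Rel (fun H K => H.card = K.card) M₁ M₂)
    (hbl₁ : ∀ H ∈ M₁, IsCharBlock τ₁ τ₂ H) (hbl₂ : ∀ K ∈ M₂, IsCharBlock κ₁ κ₂ K)
    (hnd₁ : M₁.Nodup) (hnd₂ : M₂.Nodup) :
    ∃ g : Fin N → Fin N,
      Set.InjOn g ↑(M₁.sup) ∧ (M₁.sup).image g = M₂.sup ∧
      ∀ a ∈ M₁.sup, g a ∈ M₂.sup ∧ g (τ₁ a) = κ₁ (g a) ∧ g (τ₂ a) = κ₂ (g a) := by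
  classical
  induction M₁ using Multiset.induction_on generalizing M₂ with
  | empty =>
      rw [Multiset.rel_zero_left] at hrel
      subst hrel
      exact ⟨id, by simp [Multiset.sup_zero]⟩
  | cons H M₁' ih =>
      rw [Multiset.rel_cons_left] at hrel
      obtain ⟨K, M₂', hcardHK, hrel', rfl⟩ := hrel
      have hHbl : IsCharBlock τ₁ τ₂ H := hbl₁ H (Multiset.mem_cons_self _ _)
      have hKbl : IsCharBlock κ₁ κ₂ K := hbl₂ K (Multiset.mem_cons_self _ _)
      obtain ⟨f, hfinj, hfimg, hfprop⟩ :=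
        coreMap hτ₁ hτ₂ hκ₁ hκ₂ hHbl hKbl (hlen₁ H hHbl) (hlen₂ K hKbl) hcardHK
      obtain ⟨g', hg'inj, hg'img, hg'prop⟩ :=
        ih M₂' hrel' (fun H' h => hbl₁ H' (Multiset.mem_cons_of_mem h))
          (fun K' h => hbl₂ K' (Multiset.mem_cons_of_mem h))
          (Multiset.nodup_cons.1 hnd₁).2 (Multiset.nodup_cons.1 hnd₂).2
      have hdisj₁ : ∀ a ∈ M₁'.sup, a ∉ H := by
        intro a ha haH
        obtain ⟨H', hH'm, haH'⟩ := mem_msup.1 ha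
        have hne : H' ≠ H := fun h => (Multiset.nodup_cons.1 hnd₁).1 (h ▸ hH'm)
        have := charBlock_disjoint hτ₁ hτ₂ (hbl₁ H' (Multiset.mem_cons_of_mem hH'm)) hHbl hne
        exact Finset.disjoint_left.1 this haH' haH
      have hdisj₂ : ∀ b ∈ M₂'.sup, b ∉ K := by
        intro b hb hbK
        obtain ⟨K', hK'm, hbK'⟩ := mem_msup.1 hb
        have hne : K' ≠ K := fun h => (Multiset.nodup_cons.1 hnd₂).1 (h ▸ hK'm)
        have := charBlock_disjoint hκ₁ hκ₂ (hbl₂ K' (Multiset.mem_cons_of_mem hK'm)) hKbl hne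
        exact Finset.disjoint_left.1 this hbK' hbK
      have hsupInv₁ : ∀ a ∈ M₁'.sup, τ₁ a ∈ M₁'.sup := by
        intro a ha
        obtain ⟨H', hH'm, haH'⟩ := mem_msup.1 ha
        exact mem_msup.2 ⟨H', hH'm, (hbl₁ H' (Multiset.mem_cons_of_mem hH'm)).2.1 _ haH'⟩
      have hsupInv₂ : ∀ a ∈ M₁'.sup, τ₂ a ∈ M₁'.sup := by
        intro a ha
        obtain ⟨H', hH'm, haH'⟩ := mem_msup.1 ha
        exact mem_msup.2 ⟨H', hH'm, (hbl₁ H' (Multiset.mem_cons_of_mem hH'm)).2.2.1 _ haH'⟩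
      set g : Fin N → Fin N := fun a => if a ∈ H then f a else g' a with hg
      have hgH : ∀ a ∈ H, g a = f a := fun a ha => by rw [hg]; simp only [if_pos ha]
      have hgS : ∀ a ∈ M₁'.sup, g a = g' a := fun a ha => by
        rw [hg]; simp only [if_neg (hdisj₁ a ha)]
      have hsup1 : (H ::ₘ M₁').sup = H ∪ M₁'.sup := by
        rw [Multiset.sup_cons, Finset.sup_eq_union]
      have hsup2 : (K ::ₘ M₂').sup = K ∪ M₂'.sup := by
        rw [Multiset.sup_cons, Finset.sup_eq_union]
      refine ⟨g, ?_, ?_, ?_⟩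
      · rw [hsup1]
        intro a ha b hb hab
        rw [Finset.coe_union, Set.mem_union] at ha hb
        rcases ha with ha | ha <;> rcases hb with hb | hb
        · rw [hgH a ha, hgH b hb] at hab
          exact hfinj ha hb hab
        · rw [hgH a ha, hgS b hb] at hab
          exfalso
          refine hdisj₂ (g' b) ((hg'prop b hb).1) ?_
          rw [← hab]
          exact (hfprop a ha).1
        · rw [hgS a ha, hgH b hb] at hab
          exfalso
          refine hdisj₂ (g' a) ((hg'prop a ha).1) ?_
          rw [hab]
          exact (hfprop b hb).1
        · rw [hgS a ha, hgS b hb] at hab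
          exact hg'inj ha hb hab
      · rw [hsup1, hsup2, Finset.image_union]
        have e1 : H.image g = K := by
          rw [← hfimg]
          exact Finset.image_congr fun a ha => hgH a ha
        have e2 : (M₁'.sup).image g = M₂'.sup := by
          rw [← hg'img]
          exact Finset.image_congr fun a ha => hgS a ha
        rw [e1, e2]
      · intro a ha
        rw [hsup1, Finset.mem_union] at ha
        rcases ha with ha | ha
        · have h1 : τ₁ a ∈ H := hHbl.2.1 _ ha
          have h2 : τ₂ a ∈ H := hHbl.2.2.1 _ ha
          rw [hgH a ha, hgH _ h1, hgH _ h2, hsup2, Finset.mem_union]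
          exact ⟨Or.inl (hfprop a ha).1, (hfprop a ha).2.1, (hfprop a ha).2.2⟩
        · have h1 : τ₁ a ∈ M₁'.sup := hsupInv₁ a ha
          have h2 : τ₂ a ∈ M₁'.sup := hsupInv₂ a ha
          rw [hgS a ha, hgS _ h1, hgS _ h2, hsup2, Finset.mem_union]
          exact ⟨Or.inr (hg'prop a ha).1, (hg'prop a ha).2.1, (hg'prop a ha).2.2⟩

lemma charBlock_conj {τ₁ τ₂ κ₁ κ₂ σ : Perm (Fin N)}
    (h1 : σ * τ₁ * σ⁻¹ = κ₁) (h2 : σ * τ₂ * σ⁻¹ = κ₂)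
    {H : Finset (Fin N)} (hH : IsCharBlock τ₁ τ₂ H) :
    IsCharBlock κ₁ κ₂ (H.image σ) := by
  have hκσ₁ : ∀ b, κ₁ (σ b) = σ (τ₁ b) := by
    intro b
    rw [← h1]
    simp [Perm.mul_apply]
  have hκσ₂ : ∀ b, κ₂ (σ b) = σ (τ₂ b) := by
    intro b
    rw [← h2]
    simp [Perm.mul_apply]
  refine ⟨hH.1.image σ, ?_, ?_, ?_⟩
  · intro b hb
    obtain ⟨a, ha, rfl⟩ := Finset.mem_image.1 hb
    rw [hκσ₁]
    exact Finset.mem_image.2 ⟨τ₁ a, hH.2.1 _ ha, rfl⟩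
  · intro b hb
    obtain ⟨a, ha, rfl⟩ := Finset.mem_image.1 hb
    rw [hκσ₂]
    exact Finset.mem_image.2 ⟨τ₂ a, hH.2.2.1 _ ha, rfl⟩
  · intro L hL hLne hL1 hL2
    have hK' : L.image ⇑(σ⁻¹) ⊆ H := by
      intro a ha
      obtain ⟨k, hk, rfl⟩ := Finset.mem_image.1 ha
      obtain ⟨a', ha', rfl⟩ := Finset.mem_image.1 (hL hk)
      rwa [Perm.coe_inv, Equiv.symm_apply_apply]
    have hK'1 : InvSet τ₁ (L.image ⇑(σ⁻¹)) := by
      intro a ha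
      obtain ⟨k, hk, rfl⟩ := Finset.mem_image.1 ha
      have : τ₁ (σ⁻¹ k) = σ⁻¹ (κ₁ k) := by
        apply σ.injective
        rw [← hκσ₁, Perm.coe_inv, Equiv.apply_symm_apply, Equiv.apply_symm_apply]
      rw [this]
      exact Finset.mem_image.2 ⟨κ₁ k, hL1 _ hk, rfl⟩
    have hK'2 : InvSet τ₂ (L.image ⇑(σ⁻¹)) := by
      intro a ha
      obtain ⟨k, hk, rfl⟩ := Finset.mem_image.1 ha
      have : τ₂ (σ⁻¹ k) = σ⁻¹ (κ₂ k) := by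
        apply σ.injective
        rw [← hκσ₂, Perm.coe_inv, Equiv.apply_symm_apply, Equiv.apply_symm_apply]
      rw [this]
      exact Finset.mem_image.2 ⟨κ₂ k, hL2 _ hk, rfl⟩
    have hK'H : L.image ⇑(σ⁻¹) = H := hH.2.2.2 _ hK' (hLne.image _) hK'1 hK'2
    calc L = (L.image ⇑(σ⁻¹)).image σ := by
          rw [Finset.image_image]
          have : (⇑σ ∘ ⇑(σ⁻¹)) = id := by
            funext k; simp
          rw [this, Finset.image_id]
      _ = H.image σ := by rw [hK'H]

lemma numChar_conj {τ₁ τ₂ κ₁ κ₂ σ : Perm (Fin N)}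
    (h1 : σ * τ₁ * σ⁻¹ = κ₁) (h2 : σ * τ₂ * σ⁻¹ = κ₂) :
    numChar τ₁ τ₂ = numChar κ₁ κ₂ := by
  classical
  have hid : (⇑σ ∘ ⇑(σ⁻¹)) = id := by funext k; simp
  have hid' : (⇑(σ⁻¹) ∘ ⇑σ) = id := by funext k; simp
  have hset : (Finset.univ.filter fun K : Finset (Fin N) => IsCharBlock κ₁ κ₂ K)
      = (Finset.univ.filter fun H : Finset (Fin N) => IsCharBlock τ₁ τ₂ H).image
          (fun H => H.image σ) := by
    ext K
    simp only [Finset.mem_filter, Finset.mem_univ, true_and, Finset.mem_image]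
    constructor
    · intro hK
      refine ⟨K.image ⇑(σ⁻¹), ?_, ?_⟩
      · have h1' : σ⁻¹ * κ₁ * (σ⁻¹)⁻¹ = τ₁ := by rw [← h1]; group
        have h2' : σ⁻¹ * κ₂ * (σ⁻¹)⁻¹ = τ₂ := by rw [← h2]; group
        exact charBlock_conj h1' h2' hK
      · rw [Finset.image_image, hid, Finset.image_id]
    · rintro ⟨H, hH, rfl⟩
      exact charBlock_conj h1 h2 hH
  have hinjF : Set.InjOn (fun H : Finset (Fin N) => H.image σ)
      ↑(Finset.univ.filter fun H : Finset (Fin N) => IsCharBlock τ₁ τ₂ H) := by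
    intro A _ B _ hAB
    have h := congrArg (Finset.image ⇑(σ⁻¹)) hAB
    simp only at h
    rwa [Finset.image_image, Finset.image_image, hid', Finset.image_id, Finset.image_id] at h
  unfold numChar
  rw [hset, Finset.image_val_of_injOn hinjF, Multiset.map_map]
  refine Multiset.map_congr rfl fun H _ => ?_
  simp only [Function.comp_apply]
  exact (Finset.card_image_of_injective H σ.injective).symm


/-- Two pairs of involutions, each with equal lengths on every block of its
characteristic partition, are simultaneously conjugate iff they have the same
numerical characteristic partition. -/
theorem conjugate_iff_numChar {N : ℕ} (τ₁ τ₂ κ₁ κ₂ : Equiv.Perm (Fin N))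
    (hτ₁ : τ₁ * τ₁ = 1) (hτ₂ : τ₂ * τ₂ = 1) (hκ₁ : κ₁ * κ₁ = 1) (hκ₂ : κ₂ * κ₂ = 1)
    (h₁ : ∀ H : Finset (Fin N), IsCharBlock τ₁ τ₂ H → lenOn τ₁ H = lenOn τ₂ H)
    (h₂ : ∀ H : Finset (Fin N), IsCharBlock κ₁ κ₂ H → lenOn κ₁ H = lenOn κ₂ H) :
    (∃ σ : Equiv.Perm (Fin N), σ * τ₁ * σ⁻¹ = κ₁ ∧ σ * τ₂ * σ⁻¹ = κ₂) ↔
      numChar τ₁ τ₂ = numChar κ₁ κ₂ := by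
  classical
  constructor
  · rintro ⟨σ, hc1, hc2⟩
    exact numChar_conj hc1 hc2
  · intro hnum
    unfold numChar at hnum
    have hrel : Multiset.Rel (fun H K : Finset (Fin N) => H.card = K.card)
        (Finset.univ.filter fun H : Finset (Fin N) => IsCharBlock τ₁ τ₂ H).val
        (Finset.univ.filter fun K : Finset (Fin N) => IsCharBlock κ₁ κ₂ K).val := by
      have h := Multiset.rel_eq.2 hnum
      rw [Multiset.rel_map] at h
      convert h using 2 <;> simp [Finset.filter_congr_decidable]
    obtain ⟨g, hinj, himg, hprop⟩ := glue hτ₁ hτ₂ hκ₁ hκ₂ h₁ h₂ _ _ hrel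
      (fun H h => ((Finset.mem_filter (s := Finset.univ)).1 h).2)
      (fun K h => ((Finset.mem_filter (s := Finset.univ)).1 h).2)
      (Finset.univ.filter fun H : Finset (Fin N) => IsCharBlock τ₁ τ₂ H).nodup
      (Finset.univ.filter fun K : Finset (Fin N) => IsCharBlock κ₁ κ₂ K).nodup
    have hsup₁ : (Finset.univ.filter fun H : Finset (Fin N) => IsCharBlock τ₁ τ₂ H).val.sup
        = Finset.univ := by
      apply Finset.eq_univ_of_forall
      intro a
      refine mem_msup.2 ⟨blockOf τ₁ τ₂ a, ?_, self_mem_blockOf a⟩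
      exact Finset.mem_filter.2 ⟨Finset.mem_univ _, isCharBlock_blockOf hτ₁ hτ₂ a⟩
    have hsup₂ : (Finset.univ.filter fun K : Finset (Fin N) => IsCharBlock κ₁ κ₂ K).val.sup
        = Finset.univ := by
      apply Finset.eq_univ_of_forall
      intro a
      refine mem_msup.2 ⟨blockOf κ₁ κ₂ a, ?_, self_mem_blockOf a⟩
      exact Finset.mem_filter.2 ⟨Finset.mem_univ _, isCharBlock_blockOf hκ₁ hκ₂ a⟩
    rw [hsup₁] at hinj hprop
    have hbij : Function.Bijective g := by
      have hginj : Function.Injective g := fun a b h => hinj (by simp) (by simp) h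
      exact Finite.injective_iff_bijective.1 hginj
    refine ⟨Equiv.ofBijective g hbij, ?_, ?_⟩
    · refine Equiv.ext fun b => ?_
      have ha := hprop ((Equiv.ofBijective g hbij).symm b) (Finset.mem_univ _)
      calc (Equiv.ofBijective g hbij * τ₁ * (Equiv.ofBijective g hbij)⁻¹) b
          = g (τ₁ ((Equiv.ofBijective g hbij).symm b)) := rfl
        _ = κ₁ (g ((Equiv.ofBijective g hbij).symm b)) := ha.2.1
        _ = κ₁ b := by rw [show g ((Equiv.ofBijective g hbij).symm b) = b
              from (Equiv.ofBijective g hbij).apply_symm_apply b]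
    · refine Equiv.ext fun b => ?_
      have ha := hprop ((Equiv.ofBijective g hbij).symm b) (Finset.mem_univ _)
      calc (Equiv.ofBijective g hbij * τ₂ * (Equiv.ofBijective g hbij)⁻¹) b
          = g (τ₂ ((Equiv.ofBijective g hbij).symm b)) := rfl
        _ = κ₂ (g ((Equiv.ofBijective g hbij).symm b)) := ha.2.2
        _ = κ₂ b := by rw [show g ((Equiv.ofBijective g hbij).symm b) = b
              from (Equiv.ofBijective g hbij).apply_symm_apply b]
end

section
/- Let τ, κ be involutions in Σ_N with no common proper nonempty invariant subset of {1,…,N}, and suppose some point p₁ is moved by τ and fixed by κ, with N ≥ 2 even. Then there is an enumeration p₁,…,p_N of {1,…,N} with τ = (p₁p₂)(p₃p₄)⋯(p_{N−1}p_N) and κ = (p₂p₃)(p₄p₅)⋯(p_{N−2}p_{N−1}); in particular τ has N/2 transpositions and κ has N/2 − 1 transpositions. -/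
/-! Put `ρ = κ * τ`. Each of the involutions `τ`, `κ` conjugates `ρ` to `ρ⁻¹`, and `κ` fixes `p₁`,
so `τ (ρ ^ i p₁) = ρ ^ (-i - 1) p₁` and `κ (ρ ^ i p₁) = ρ ^ (-i) p₁`. Hence the `ρ`-orbit of `p₁` is
invariant under both involutions; by minimality it is everything, so `ρ` is an `N`-cycle.
Listing this orbit in the zigzag order `p₁, ρ⁻¹ p₁, ρ p₁, ρ⁻² p₁, ρ² p₁, …` makes `τ` swap the
points in positions `2i, 2i + 1` and `κ` swap those in positions `2i + 1, 2i + 2`, while `κ` fixes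
the first point `p₁` and the last point `ρ ^ (-N / 2) p₁ = ρ ^ (N / 2) p₁`. -/

open Equiv Finset

def NoCommonInvariant {N : ℕ} (τ κ : Equiv.Perm (Fin N)) : Prop :=
  ∀ H : Finset (Fin N), H.Nonempty → H ≠ Finset.univ → ¬ (InvSet τ H ∧ InvSet κ H)

theorem injOn_Iio_comp_add {α : Type*} {w : ℕ → α} {n m : ℕ} (hw : Set.InjOn w (Set.Iio (n + m))) :
    Set.InjOn (fun j => w (j + m)) (Set.Iio n) := fun _ ha _ hb h =>
  Nat.add_right_cancel (hw (Nat.add_lt_add_right ha m) (Nat.add_lt_add_right hb m) h)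

section SwapPairs

variable {α : Type*} [DecidableEq α]

def swapPairs (w : ℕ → α) (k : ℕ) : Perm α :=
  (List.ofFn fun i : Fin k => swap (w (2 * i)) (w (2 * i + 1))).prod

theorem swapPairs_succ (w : ℕ → α) (k : ℕ) :
    swapPairs w (k + 1) = swap (w 0) (w 1) * swapPairs (fun j => w (j + 2)) k := by
  simp only [swapPairs, List.ofFn_succ, List.prod_cons, Fin.val_zero, Fin.val_succ, mul_zero,
    zero_add, mul_add, mul_one, add_right_comm]

variable {w : ℕ → α} {k : ℕ}

theorem swapPairs_apply_of_forall_ne {x : α} (hx : ∀ j < 2 * k, w j ≠ x) :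
    swapPairs w k x = x := by
  induction k generalizing w with
  | zero => rfl
  | succ k ih =>
    rw [swapPairs_succ, Perm.mul_apply, ih fun j hj => hx (j + 2) (by omega),
      swap_apply_of_ne_of_ne (hx 0 (by omega)).symm (hx 1 (by omega)).symm]

theorem swapPairs_apply_pair (hw : Set.InjOn w (Set.Iio (2 * k))) {i : ℕ} (hi : i < k) :
    swapPairs w k (w (2 * i)) = w (2 * i + 1) ∧ swapPairs w k (w (2 * i + 1)) = w (2 * i) := by
  induction k generalizing w i with
  | zero => omega
  | succ k ih =>
    have hne : ∀ a < 2 * k + 2, ∀ b < 2 * k + 2, a ≠ b → w a ≠ w b := fun a ha b hb hab h =>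
      hab (hw (show a < 2 * (k + 1) by omega) (show b < 2 * (k + 1) by omega) h)
    rw [swapPairs_succ, Perm.mul_apply, Perm.mul_apply]
    rcases i with _ | i
    · have hfix : ∀ a < 2, swapPairs (fun j => w (j + 2)) k (w a) = w a := fun a ha =>
        swapPairs_apply_of_forall_ne fun j hj => hne _ (by omega) _ (by omega) (by omega)
      simp [hfix]
    · have hw' : Set.InjOn (fun j => w (j + 2)) (Set.Iio (2 * k)) :=
        injOn_Iio_comp_add (hw.mono (Set.Iio_subset_Iio (by omega)))
      obtain ⟨h₁, h₂⟩ := ih hw' (i := i) (by omega)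
      rw [show 2 * (i + 1) = 2 * i + 2 by ring, h₁, h₂]
      constructor <;> apply swap_apply_of_ne_of_ne <;>
        exact hne _ (by omega) _ (by omega) (by omega)

theorem eq_swapPairs {σ : Perm α} (hσ : σ * σ = 1)
    (hw : Set.InjOn w (Set.Iio (2 * k))) (hpair : ∀ i < k, σ (w (2 * i)) = w (2 * i + 1))
    (hfix : ∀ x, (∀ j < 2 * k, w j ≠ x) → σ x = x) : σ = swapPairs w k := by
  ext x
  by_cases hx : ∀ j < 2 * k, w j ≠ x
  · rw [hfix x hx, swapPairs_apply_of_forall_ne hx]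
  obtain ⟨j, hj, rfl⟩ : ∃ j < 2 * k, w j = x := by simpa using hx
  obtain ⟨i, rfl | rfl⟩ : ∃ i, j = 2 * i ∨ j = 2 * i + 1 := ⟨j / 2, by omega⟩
  · rw [hpair i (by omega), (swapPairs_apply_pair hw (by omega)).1]
  · rw [(swapPairs_apply_pair hw (by omega)).2, ← hpair i (by omega), ← Perm.mul_apply, hσ,
      Perm.one_apply]

theorem card_support_swapPairs [Fintype α] (hw : Set.InjOn w (Set.Iio (2 * k))) :
    (swapPairs w k).support.card = 2 * k := by
  have hsupp : (swapPairs w k).support = (range (2 * k)).image w := by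
    ext x
    simp only [Perm.mem_support, mem_image, mem_range, ne_eq]
    constructor
    · intro hx
      by_contra! h
      exact hx (swapPairs_apply_of_forall_ne h)
    · rintro ⟨j, hj, rfl⟩
      have hne : ∀ j' < 2 * k, j' ≠ j → w j' ≠ w j := fun j' hj' hne h => hne (hw hj' hj h)
      obtain ⟨i, rfl | rfl⟩ : ∃ i, j = 2 * i ∨ j = 2 * i + 1 := ⟨j / 2, by omega⟩
      · rw [(swapPairs_apply_pair hw (by omega)).1]
        exact hne _ (by omega) (by omega)
      · rw [(swapPairs_apply_pair hw (by omega)).2]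
        exact hne _ (by omega) (by omega)
  rw [hsupp, card_image_of_injOn (by simpa using hw), card_range]

end SwapPairs

section Dihedral

variable {G : Type*} [Group G] {s t : G}

theorem semiconjBy_mul_inv_right (hs : s * s = 1) (ht : t * t = 1) :
    SemiconjBy s (t * s) (t * s)⁻¹ := by
  rw [SemiconjBy, mul_inv_rev, inv_eq_of_mul_eq_one_right hs, inv_eq_of_mul_eq_one_right ht,
    mul_assoc]

theorem semiconjBy_mul_inv_left (hs : s * s = 1) (ht : t * t = 1) :
    SemiconjBy t (t * s) (t * s)⁻¹ := by
  rw [SemiconjBy, mul_inv_rev, inv_eq_of_mul_eq_one_right hs, inv_eq_of_mul_eq_one_right ht,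
    ← mul_assoc, ht, one_mul, mul_assoc, ht, mul_one]

end Dihedral

namespace Equiv.Perm

variable {α : Type*}

section Involutions

variable {τ κ : Perm α} {x : α} (hτ : τ * τ = 1) (hκ : κ * κ = 1) (hx : κ x = x)
include hτ hκ hx

theorem right_apply_zpow_mul_apply (i : ℤ) : τ (((κ * τ) ^ i) x) = ((κ * τ) ^ (-i - 1)) x := by
  have hτx : ((κ * τ) ^ (-1 : ℤ)) x = τ x := by
    rw [zpow_neg_one, inv_eq_iff_eq, mul_apply, ← mul_apply τ, hτ, one_apply, hx]
  rw [← mul_apply, ((semiconjBy_mul_inv_right hτ hκ).zpow_right i).eq, inv_zpow', mul_apply,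
    ← hτx, ← mul_apply, ← zpow_add, sub_eq_add_neg]

theorem left_apply_zpow_mul_apply (i : ℤ) : κ (((κ * τ) ^ i) x) = ((κ * τ) ^ (-i)) x := by
  rw [← mul_apply, ((semiconjBy_mul_inv_left hτ hκ).zpow_right i).eq, inv_zpow', mul_apply, hx]

end Involutions

theorem zpow_apply_eq_zpow_apply_iff (ρ : Perm α) (x : α) {a b : ℤ} :
    (ρ ^ a) x = (ρ ^ b) x ↔ (Function.minimalPeriod ρ x : ℤ) ∣ a - b := by
  rw [show Function.minimalPeriod ρ x = Function.minimalPeriod (ρ • ·) x from rfl,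
    ← MulAction.zpow_smul_eq_iff_minimalPeriod_dvd, Perm.smul_def, sub_eq_neg_add, zpow_add,
    mul_apply, zpow_neg, inv_eq_iff_eq, eq_comm]

theorem minimalPeriod_eq_card_of_forall_exists_zpow_apply_eq [Finite α] (ρ : Perm α) (x : α)
    (h : ∀ y, ∃ i : ℤ, (ρ ^ i) x = y) : Function.minimalPeriod ρ x = Nat.card α := by
  have horbit : ∀ y, y ∈ MulAction.orbit (Subgroup.zpowers ρ) x := fun y => by
    obtain ⟨i, hi⟩ := h y
    exact ⟨⟨ρ ^ i, i, rfl⟩, hi⟩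
  rw [← Nat.card_zmod (Function.minimalPeriod ρ x), ← Nat.card_congr (subtypeUnivEquiv horbit)]
  exact (Nat.card_congr (MulAction.orbitZPowersEquiv ρ x)).symm

end Equiv.Perm

def zigzag (j : ℕ) : ℤ := if j % 2 = 0 then (j / 2 : ℕ) else -((j / 2 : ℕ) + 1)

theorem zigzag_two_mul (i : ℕ) : zigzag (2 * i) = i := by
  unfold zigzag
  split_ifs <;> omega

theorem zigzag_two_mul_add_one (i : ℕ) : zigzag (2 * i + 1) = -i - 1 := by
  unfold zigzag
  split_ifs <;> omega

theorem eq_of_dvd_zigzag_sub {N j j' : ℕ} (hN : N % 2 = 0) (hj : j < N) (hj' : j' < N)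
    (h : (N : ℤ) ∣ zigzag j - zigzag j') : j = j' := by
  have hlt : |zigzag j - zigzag j'| < N := by
    rw [abs_lt]
    unfold zigzag
    split_ifs <;> omega
  have hzero := Int.eq_zero_of_abs_lt_dvd h hlt
  unfold zigzag at hzero
  split_ifs at hzero <;> omega

def zigzagWalk {α : Type*} (τ κ : Perm α) (x : α) (j : ℕ) : α := ((κ * τ) ^ zigzag j) x

section ZigzagWalk

variable {α : Type*} {τ κ : Perm α} {x : α}

theorem zigzagWalk_zero : zigzagWalk τ κ x 0 = x := rfl

variable (hτ : τ * τ = 1) (hκ : κ * κ = 1) (hx : κ x = x)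
include hτ hκ hx

theorem right_apply_zigzagWalk_two_mul (i : ℕ) :
    τ (zigzagWalk τ κ x (2 * i)) = zigzagWalk τ κ x (2 * i + 1) := by
  rw [zigzagWalk, zigzagWalk, zigzag_two_mul, zigzag_two_mul_add_one,
    Perm.right_apply_zpow_mul_apply hτ hκ hx]

theorem left_apply_zigzagWalk_two_mul_add_one (i : ℕ) :
    κ (zigzagWalk τ κ x (2 * i + 1)) = zigzagWalk τ κ x (2 * i + 2) := by
  rw [zigzagWalk, zigzagWalk, zigzag_two_mul_add_one, show 2 * i + 2 = 2 * (i + 1) by ring,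
    zigzag_two_mul, Perm.left_apply_zpow_mul_apply hτ hκ hx]
  push_cast
  ring_nf

end ZigzagWalk

section NoCommonInvariant

variable {N : ℕ} {τ κ : Perm (Fin N)} {x : Fin N}
  (hτ : τ * τ = 1) (hκ : κ * κ = 1) (hmin : NoCommonInvariant τ κ) (hx : κ x = x)
include hτ hκ hmin hx

theorem exists_zpow_mul_apply_eq (y : Fin N) : ∃ i : ℤ, ((κ * τ) ^ i) x = y := by
  classical
  set H := univ.filter fun y => ∃ i : ℤ, ((κ * τ) ^ i) x = y
  have hH : H = univ := by
    by_contra hne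
    refine hmin H ⟨x, by simpa [H] using ⟨0, rfl⟩⟩ hne ⟨?_, ?_⟩
    · rintro _ hz
      obtain ⟨i, rfl⟩ := by simpa [H] using hz
      simpa [H] using ⟨_, (Perm.right_apply_zpow_mul_apply hτ hκ hx i).symm⟩
    · rintro _ hz
      obtain ⟨i, rfl⟩ := by simpa [H] using hz
      simpa [H] using ⟨_, (Perm.left_apply_zpow_mul_apply hτ hκ hx i).symm⟩
  have hy : y ∈ H := hH ▸ mem_univ y
  simpa [H] using hy

theorem zpow_mul_apply_eq_zpow_mul_apply_iff {a b : ℤ} :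
    ((κ * τ) ^ a) x = ((κ * τ) ^ b) x ↔ (N : ℤ) ∣ a - b := by
  rw [Perm.zpow_apply_eq_zpow_apply_iff,
    Perm.minimalPeriod_eq_card_of_forall_exists_zpow_apply_eq _ _
      (exists_zpow_mul_apply_eq hτ hκ hmin hx), Nat.card_fin]

variable (hN : N % 2 = 0)
include hN

theorem injOn_zigzagWalk : Set.InjOn (zigzagWalk τ κ x) (Set.Iio N) := fun _ ha _ hb h =>
  eq_of_dvd_zigzag_sub hN ha hb ((zpow_mul_apply_eq_zpow_mul_apply_iff hτ hκ hmin hx).mp h)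

theorem bijective_zigzagWalk : Function.Bijective fun j : Fin N => zigzagWalk τ κ x j :=
  Finite.injective_iff_bijective.mp fun a b h =>
    Fin.ext (injOn_zigzagWalk hτ hκ hmin hx hN a.2 b.2 h)

theorem exists_zigzagWalk_eq (y : Fin N) : ∃ j < N, zigzagWalk τ κ x j = y := by
  obtain ⟨j, hj⟩ := (bijective_zigzagWalk hτ hκ hmin hx hN).2 y
  exact ⟨j, j.2, hj⟩

theorem left_apply_zigzagWalk_sub_one :
    κ (zigzagWalk τ κ x (N - 1)) = zigzagWalk τ κ x (N - 1) := by
  have hlast : zigzag (N - 1) = -(N / 2 : ℕ) := by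
    unfold zigzag
    split_ifs <;> omega
  rw [zigzagWalk, Perm.left_apply_zpow_mul_apply hτ hκ hx,
    zpow_mul_apply_eq_zpow_mul_apply_iff hτ hκ hmin hx, hlast]
  exact ⟨1, by omega⟩

theorem right_eq_swapPairs_zigzagWalk : τ = swapPairs (zigzagWalk τ κ x) (N / 2) := by
  refine eq_swapPairs hτ ((injOn_zigzagWalk hτ hκ hmin hx hN).mono (Set.Iio_subset_Iio (by omega)))
    (fun i _ => right_apply_zigzagWalk_two_mul hτ hκ hx i) fun y hy => ?_
  obtain ⟨j, hj, rfl⟩ := exists_zigzagWalk_eq hτ hκ hmin hx hN y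
  exact absurd rfl (hy j (by omega))

theorem left_eq_swapPairs_zigzagWalk :
    κ = swapPairs (fun j => zigzagWalk τ κ x (j + 1)) (N / 2 - 1) := by
  refine eq_swapPairs hκ (injOn_Iio_comp_add
      ((injOn_zigzagWalk hτ hκ hmin hx hN).mono (Set.Iio_subset_Iio (by omega))))
    (fun i _ => left_apply_zigzagWalk_two_mul_add_one hτ hκ hx i) fun y hy => ?_
  obtain ⟨j, hj, rfl⟩ := exists_zigzagWalk_eq hτ hκ hmin hx hN y
  obtain rfl | rfl : j = 0 ∨ j = N - 1 := by
    by_contra! h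
    exact hy (j - 1) (by omega) (by rw [Nat.sub_add_cancel (by omega)])
  exacts [hx, left_apply_zigzagWalk_sub_one hτ hκ hmin hx hN]

end NoCommonInvariant

/-- Case I of Lemma 2: if τ, κ are involutions with no common proper nonempty
invariant subset, N ≥ 2 is even, and some point p₁ is moved by τ but fixed by
κ, then there is an enumeration p₁, p₂, …, p_N of {1,…,N} with
τ = (p₁p₂)(p₃p₄)⋯(p_{N−1}p_N) and κ = (p₂p₃)(p₄p₅)⋯(p_{N−2}p_{N−1}); in
particular τ has N/2 transpositions and κ has N/2 − 1 transpositions. -/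
theorem case_I_structure {N : ℕ} (hN2 : 2 ≤ N) (hNeven : N % 2 = 0)
    (τ κ : Equiv.Perm (Fin N)) (hτ : τ * τ = 1) (hκ : κ * κ = 1)
    (hmin : NoCommonInvariant τ κ)
    (p₁ : Fin N) (hfixed : κ p₁ = p₁) :
    ∃ p : Equiv.Perm (Fin N),
      p ⟨0, by omega⟩ = p₁ ∧
      τ = (List.ofFn (fun i : Fin (N / 2) =>
        Equiv.swap (p ⟨2 * i.1, by have := i.2; omega⟩)
          (p ⟨2 * i.1 + 1, by have := i.2; omega⟩))).prod ∧
      κ = (List.ofFn (fun i : Fin (N / 2 - 1) =>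
        Equiv.swap (p ⟨2 * i.1 + 1, by have := i.2; omega⟩)
          (p ⟨2 * i.1 + 2, by have := i.2; omega⟩))).prod ∧
      τ.support.card = 2 * (N / 2) ∧ κ.support.card = 2 * (N / 2 - 1) := by
  have hinj := injOn_zigzagWalk hτ hκ hmin hfixed hNeven
  have hτeq := right_eq_swapPairs_zigzagWalk hτ hκ hmin hfixed hNeven
  have hκeq := left_eq_swapPairs_zigzagWalk hτ hκ hmin hfixed hNeven
  refine ⟨Equiv.ofBijective _ (bijective_zigzagWalk hτ hκ hmin hfixed hNeven),
    (Equiv.ofBijective_apply _ _ _).trans zigzagWalk_zero, hτeq, hκeq, ?_, ?_⟩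
  · rw [hτeq, card_support_swapPairs (hinj.mono (Set.Iio_subset_Iio (by omega)))]
  · rw [hκeq, card_support_swapPairs
      (injOn_Iio_comp_add (hinj.mono (Set.Iio_subset_Iio (by omega))))]
end
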